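/- arXiv:1112.2528 — 3 statements merged into one kernel-verified Lean document; each statement's English description precedes it below -/
import Mathlib

section
/- Let N ≥ 1 be an integer, ε := 1/N, and let φ''_F, φ''_{2F} ∈ ℝ. Set c₀ := min(φ''_F, φ''_F + 4φ''_{2F}). Then for every u ∈ U one has ⟨L^a u, u⟩ ≥ c₀ ‖Du‖²_{ℓ²_ε}. -/
open Finset

noncomputable section

/-- mesh size ε = 1/N -/
def eps (N : ℕ) : ℝ := 1 / N

/-- the periodic cell {-N+1, …, N} -/
def cell (N : ℕ) : Finset ℤ := Finset.Icc (-(N : ℤ) + 1) N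

/-- 2N-periodicity -/
def Per (N : ℕ) (u : ℤ → ℝ) : Prop := ∀ ℓ : ℤ, u (ℓ + 2 * N) = u ℓ

/-- zero mean over a period -/
def MeanZero (N : ℕ) (u : ℤ → ℝ) : Prop := ∑ ℓ ∈ cell N, u ℓ = 0

/-- first discrete derivative (Du)_ℓ = (u_ℓ - u_{ℓ-1})/ε -/
def D (N : ℕ) (u : ℤ → ℝ) (ℓ : ℤ) : ℝ := (u ℓ - u (ℓ - 1)) / eps N

/-- second discrete derivative (D²u)_ℓ = ((Du)_{ℓ+1} - (Du)_ℓ)/ε -/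
def D2 (N : ℕ) (u : ℤ → ℝ) (ℓ : ℤ) : ℝ := (D N u (ℓ + 1) - D N u ℓ) / eps N

/-- third discrete derivative (D³u)_ℓ = ((D²u)_ℓ - (D²u)_{ℓ-1})/ε -/
def D3 (N : ℕ) (u : ℤ → ℝ) (ℓ : ℤ) : ℝ := (D2 N u ℓ - D2 N u (ℓ - 1)) / eps N

/-- the ℓ²_ε inner product ⟨u,w⟩ = ε Σ u_ℓ w_ℓ -/
def ip (N : ℕ) (u w : ℤ → ℝ) : ℝ := ∑ ℓ ∈ cell N, eps N * (u ℓ * w ℓ)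

/-- the squared ℓ²_ε norm ‖u‖² = ε Σ |u_ℓ|² -/
def nsq (N : ℕ) (u : ℤ → ℝ) : ℝ := ∑ ℓ ∈ cell N, eps N * |u ℓ| ^ 2

/-- linearized atomistic operator -/
def La (N : ℕ) (cF c2F : ℝ) (v : ℤ → ℝ) (ℓ : ℤ) : ℝ :=
  cF * (-v (ℓ + 1) + 2 * v ℓ - v (ℓ - 1)) / eps N ^ 2
    + c2F * (-v (ℓ + 2) + 2 * v ℓ - v (ℓ - 2)) / eps N ^ 2

/-!
Summation by parts on the periodic cell gives
`⟨L^a u, u⟩ = ε⁻¹ (φ''_F Σ |u_ℓ - u_{ℓ-1}|² + φ''_{2F} Σ |u_ℓ - u_{ℓ-2}|²)` and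
`‖Du‖² = ε⁻¹ Σ |u_ℓ - u_{ℓ-1}|²`. Since `u_ℓ - u_{ℓ-2}` is the sum of two nearest-neighbour
differences, the second-neighbour sum lies between `0` and `4` times the nearest-neighbour one;
the bound follows by distinguishing the sign of `φ''_{2F}`.
-/

open Function

theorem Function.Periodic.sum_Ico_comp_add_one {M : Type*} [AddCommMonoid M] {f : ℤ → M}
    {p : ℤ} (hf : Periodic f p) (a : ℤ) :
    ∑ ℓ ∈ Ico a (a + p), f (ℓ + 1) = ∑ ℓ ∈ Ico a (a + p), f ℓ := by
  rcases le_or_gt p 0 with hp | hp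
  · rw [Ico_eq_empty_of_le (by omega), sum_empty, sum_empty]
  rw [sum_Ico_add', ← insert_Ico_add_one_left_eq_Ico (by omega : a < a + p),
    ← insert_Ico_right_eq_Ico_add_one (by omega : a + 1 ≤ a + p),
    sum_insert right_notMem_Ico, sum_insert (by simp), hf a]

theorem Function.Periodic.sum_Ico_comp_add {M : Type*} [AddCommMonoid M] {f : ℤ → M}
    {p : ℤ} (hf : Periodic f p) (a k : ℤ) :
    ∑ ℓ ∈ Ico a (a + p), f (ℓ + k) = ∑ ℓ ∈ Ico a (a + p), f ℓ := by
  induction k using Int.induction_on with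
  | zero => simp
  | succ k ih =>
    rw [← ih, ← (hf.add_const k).sum_Ico_comp_add_one a]
    exact sum_congr rfl fun ℓ _ => congrArg f (by ring)
  | pred k ih =>
    rw [← ih, ← (hf.add_const (-(k : ℤ) - 1)).sum_Ico_comp_add_one a]
    exact sum_congr rfl fun ℓ _ => congrArg f (by ring)

theorem cell_eq_Ico (N : ℕ) : cell N = Ico (-(N : ℤ) + 1) (-(N : ℤ) + 1 + 2 * N) := by
  ext ℓ
  simp only [cell, mem_Icc, mem_Ico]
  omega

theorem sum_cell_comp_add {M : Type*} [AddCommMonoid M] {N : ℕ} {f : ℤ → M}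
    (hf : Periodic f (2 * N)) (k : ℤ) :
    ∑ ℓ ∈ cell N, f (ℓ + k) = ∑ ℓ ∈ cell N, f ℓ := by
  rw [cell_eq_Ico, hf.sum_Ico_comp_add]

theorem sum_cell_comp_sub {M : Type*} [AddCommMonoid M] {N : ℕ} {f : ℤ → M}
    (hf : Periodic f (2 * N)) (k : ℤ) :
    ∑ ℓ ∈ cell N, f (ℓ - k) = ∑ ℓ ∈ cell N, f ℓ := by
  simpa only [← sub_eq_add_neg] using sum_cell_comp_add hf (-k)

theorem sum_cell_secondDiff_mul_self {N : ℕ} {u : ℤ → ℝ} (hu : Periodic u (2 * N)) (k : ℤ) :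
    ∑ ℓ ∈ cell N, (-u (ℓ + k) + 2 * u ℓ - u (ℓ - k)) * u ℓ
      = ∑ ℓ ∈ cell N, (u ℓ - u (ℓ - k)) ^ 2 := by
  have hcross : ∑ ℓ ∈ cell N, u (ℓ + k) * u ℓ = ∑ ℓ ∈ cell N, u ℓ * u (ℓ - k) := by
    simpa only [add_sub_cancel_right] using
      sum_cell_comp_add (f := fun ℓ => u ℓ * u (ℓ - k)) (hu.mul (hu.sub_const k)) k
  have hsq : ∑ ℓ ∈ cell N, u (ℓ - k) ^ 2 = ∑ ℓ ∈ cell N, u ℓ ^ 2 :=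
    sum_cell_comp_sub (f := fun ℓ => u ℓ ^ 2) (hu.comp fun x => x ^ 2) k
  rw [← sub_eq_zero, ← sum_sub_distrib]
  calc ∑ ℓ ∈ cell N, ((-u (ℓ + k) + 2 * u ℓ - u (ℓ - k)) * u ℓ - (u ℓ - u (ℓ - k)) ^ 2)
      = ∑ ℓ ∈ cell N, (u ℓ * u (ℓ - k) - u (ℓ + k) * u ℓ + (u ℓ ^ 2 - u (ℓ - k) ^ 2)) :=
        sum_congr rfl fun ℓ _ => by ring
    _ = 0 := by rw [sum_add_distrib, sum_sub_distrib, sum_sub_distrib, hcross, hsq]; simp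

theorem sum_cell_sq_sub_two_le {N : ℕ} {u : ℤ → ℝ} (hu : Periodic u (2 * N)) :
    ∑ ℓ ∈ cell N, (u ℓ - u (ℓ - 2)) ^ 2 ≤ 4 * ∑ ℓ ∈ cell N, (u ℓ - u (ℓ - 1)) ^ 2 := by
  have hshift : ∑ ℓ ∈ cell N, (u (ℓ - 1) - u (ℓ - 1 - 1)) ^ 2
      = ∑ ℓ ∈ cell N, (u ℓ - u (ℓ - 1)) ^ 2 :=
    sum_cell_comp_sub (f := fun ℓ => (u ℓ - u (ℓ - 1)) ^ 2)
      ((hu.sub (hu.sub_const 1)).comp fun x => x ^ 2) 1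
  calc ∑ ℓ ∈ cell N, (u ℓ - u (ℓ - 2)) ^ 2
      ≤ ∑ ℓ ∈ cell N, (2 * (u ℓ - u (ℓ - 1)) ^ 2 + 2 * (u (ℓ - 1) - u (ℓ - 1 - 1)) ^ 2) := by
        refine sum_le_sum fun ℓ _ => ?_
        rw [sub_sub, one_add_one_eq_two]
        nlinarith [sq_nonneg (u ℓ - 2 * u (ℓ - 1) + u (ℓ - 2))]
    _ = 4 * ∑ ℓ ∈ cell N, (u ℓ - u (ℓ - 1)) ^ 2 := by
        rw [sum_add_distrib, ← mul_sum, ← mul_sum, hshift]; ring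

theorem eps_ne_zero {N : ℕ} (hN : 1 ≤ N) : eps N ≠ 0 := by
  unfold eps; positivity

theorem ip_La_self {N : ℕ} (hN : 1 ≤ N) (cF c2F : ℝ) {u : ℤ → ℝ} (hu : Periodic u (2 * N)) :
    ip N (La N cF c2F u) u
      = (cF * ∑ ℓ ∈ cell N, (u ℓ - u (ℓ - 1)) ^ 2
          + c2F * ∑ ℓ ∈ cell N, (u ℓ - u (ℓ - 2)) ^ 2) / eps N := by
  have hε := eps_ne_zero hN
  rw [← sum_cell_secondDiff_mul_self hu, ← sum_cell_secondDiff_mul_self hu, mul_sum, mul_sum,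
    ← sum_add_distrib, sum_div, ip]
  refine sum_congr rfl fun ℓ _ => ?_
  unfold La
  field_simp

theorem nsq_D {N : ℕ} (hN : 1 ≤ N) (u : ℤ → ℝ) :
    nsq N (D N u) = (∑ ℓ ∈ cell N, (u ℓ - u (ℓ - 1)) ^ 2) / eps N := by
  have hε := eps_ne_zero hN
  rw [sum_div, nsq]
  refine sum_congr rfl fun ℓ _ => ?_
  rw [sq_abs, D]
  field_simp

theorem min_mul_le_mul_add_mul {a b p q : ℝ} (hq : 0 ≤ q) (hqp : q ≤ 4 * p) :
    min a (a + 4 * b) * p ≤ a * p + b * q := by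
  rcases le_or_gt 0 b with hb | hb
  · nlinarith [min_le_left a (a + 4 * b)]
  · nlinarith [min_le_right a (a + 4 * b)]

theorem stmt_2_general (N : ℕ) (hN : 1 ≤ N) (cF c2F : ℝ) (u : ℤ → ℝ)
    (hper : Per N u) :
    ip N (La N cF c2F u) u ≥ min cF (cF + 4 * c2F) * nsq N (D N u) := by
  rw [ip_La_self hN cF c2F hper, nsq_D hN, ge_iff_le, ← mul_div_assoc]
  refine div_le_div_of_nonneg_right ?_ (by unfold eps; positivity)
  exact min_mul_le_mul_add_mul (sum_nonneg fun ℓ _ => sq_nonneg _) (sum_cell_sq_sub_two_le hper)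

/-- coercivity of the atomistic operator:
`⟨L^a u, u⟩ ≥ c₀ ‖Du‖²_{ℓ²_ε}` with `c₀ = min(φ''_F, φ''_F + 4φ''_{2F})`. -/
theorem stmt_2 (N : ℕ) (hN : 1 ≤ N) (cF c2F : ℝ) (u : ℤ → ℝ)
    (hper : Per N u) (hmean : MeanZero N u) :
    ip N (La N cF c2F u) u ≥ min cF (cF + 4 * c2F) * nsq N (D N u) :=
  stmt_2_general N hN cF c2F u hper
end
end

section
/- Let N ≥ 1 be an integer, ε := 1/N, and β : ℤ → ℝ 2N-periodic. Let I := {ℓ ∈ {−N+1,…,N} : 0 < β_{ℓ+j} < 1 for some j ∈ {−2,−1,1,2}} and K := #I, and assume that (D³β)_{ℓ+1} = 0 for every ℓ ∈ {−N+1,…,N} with ℓ ∉ I. Then for every u ∈ U, the term T := Σ_{ℓ=−N+1}^{N} ε³ (D³β)_{ℓ+1} u_ℓ (Du)_{ℓ+1} satisfies |T| ≤ √2 · ε² (Kε)^{1/2} ‖D³β‖_{ℓ∞} ‖Du‖²_{ℓ²_ε}, where ‖D³β‖_{ℓ∞} := max_{−N+1 ≤ ℓ ≤ N} |(D³β)_ℓ|.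 -/
/-!
Only the indices of the interface set `I` contribute to `T`. There `|D³β|` is bounded by its
maximum, and `|u_ℓ| ≤ √2 ‖Du‖` by a discrete Sobolev inequality: since `u` has mean zero it has
a value of the opposite sign to `u_ℓ` somewhere in the cell, and telescoping from there followed by
Cauchy–Schwarz over the `2N` cell points gives the bound. What remains, `ε Σ_{ℓ ∈ I} |Du_{ℓ+1}|`, is
at most `√(Kε) ‖Du‖` by Cauchy–Schwarz over `I` and periodicity of `Du`.
-/

open Finset

noncomputable section

attribute [local instance] Classical.propDecidable

/-- the interface (blending) index set
`I := {ℓ ∈ {−N+1,…,N} : 0 < β_{ℓ+j} < 1 for some j ∈ {−2,−1,1,2}}` -/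
def interf (N : ℕ) (β : ℤ → ℝ) : Finset ℤ :=
  (cell N).filter fun ℓ =>
    ∃ j ∈ ({-2, -1, 1, 2} : Finset ℤ), 0 < β (ℓ + j) ∧ β (ℓ + j) < 1

/-- the error term T -/
def Tterm (N : ℕ) (β u : ℤ → ℝ) : ℝ :=
  ∑ ℓ ∈ cell N, eps N ^ 3 * D3 N β (ℓ + 1) * u ℓ * D N u (ℓ + 1)

lemma eps_nonneg (N : ℕ) : 0 ≤ eps N := by
  unfold eps; positivity

lemma one_le_of_mem_cell {N : ℕ} {ℓ : ℤ} (hℓ : ℓ ∈ cell N) : 1 ≤ N := by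
  simp only [cell, mem_Icc] at hℓ
  omega

lemma eps_mul_D {N : ℕ} (hN : 1 ≤ N) (u : ℤ → ℝ) (k : ℤ) :
    eps N * D N u k = u k - u (k - 1) := by
  have : eps N ≠ 0 := by unfold eps; positivity
  rw [D, mul_div_cancel₀ _ this]

lemma card_cell_mul_eps {N : ℕ} (hN : 1 ≤ N) : (#(cell N) : ℝ) * eps N = 2 := by
  have hcard : #(cell N) = 2 * N := by simp only [cell, Int.card_Icc]; omega
  rw [hcard, eps]
  field_simp
  push_cast
  ring

namespace Per

variable {N : ℕ} {u : ℤ → ℝ}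

lemma periodic (h : Per N u) : Function.Periodic u (2 * N : ℤ) := h

lemma D (h : Per N u) : Per N (D N u) := fun ℓ => by
  simp only [_root_.D, h ℓ, show ℓ + 2 * (N : ℤ) - 1 = ℓ - 1 + 2 * N by ring, h (ℓ - 1)]

lemma D2 (h : Per N u) : Per N (D2 N u) := fun ℓ => by
  simp only [_root_.D2, h.D ℓ, show ℓ + 2 * (N : ℤ) + 1 = ℓ + 1 + 2 * N by ring, h.D (ℓ + 1)]

lemma D3 (h : Per N u) : Per N (D3 N u) := fun ℓ => by
  simp only [_root_.D3, h.D2 ℓ, show ℓ + 2 * (N : ℤ) - 1 = ℓ - 1 + 2 * N by ring, h.D2 (ℓ - 1)]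

end Per

lemma abs_le_sup'_cell {N : ℕ} {f : ℤ → ℝ} (hf : Per N f) (hne : (cell N).Nonempty) (ℓ : ℤ) :
    |f ℓ| ≤ (cell N).sup' hne (fun m => |f m|) := by
  obtain ⟨m, hm⟩ := hne
  have hN := one_le_of_mem_cell hm
  obtain ⟨y, hy, hfy⟩ := hf.periodic.exists_mem_Ico (by omega) ℓ (-(N : ℤ) + 1)
  have hy' : y ∈ cell N := by
    simp only [Set.mem_Ico] at hy
    simp only [cell, mem_Icc]
    omega
  rw [hfy]
  exact le_sup' (fun m => |f m|) hy'

lemma sum_cell_comp_add_one {N : ℕ} {g : ℤ → ℝ} (hg : Per N g) :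
    ∑ ℓ ∈ cell N, g (ℓ + 1) = ∑ ℓ ∈ cell N, g ℓ := by
  refine sum_nbij' (fun ℓ => if ℓ = N then -N + 1 else ℓ + 1)
    (fun ℓ => if ℓ = -N + 1 then N else ℓ - 1) ?_ ?_ ?_ ?_ ?_ <;> intro ℓ hℓ
  all_goals simp only [cell, mem_Icc] at hℓ ⊢
  all_goals split_ifs with h
  all_goals try omega
  · rw [h, ← hg (-N + 1)]; ring_nf
  · rfl

lemma nsq_comp_add_one {N : ℕ} {v : ℤ → ℝ} (hv : Per N v) :
    nsq N (fun ℓ => v (ℓ + 1)) = nsq N v :=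
  sum_cell_comp_add_one (g := fun ℓ => eps N * |v ℓ| ^ 2) fun ℓ => by simp only [hv ℓ]

lemma sub_eq_sum_Ioc {M : Type*} [AddCommGroup M] (f : ℤ → M) {a b : ℤ} (hab : a ≤ b) :
    f b - f a = ∑ k ∈ Ioc a b, (f k - f (k - 1)) := by
  induction b, hab using Int.leInduction with
  | base => simp
  | succ b hab ih =>
    rw [← insert_Ioc_right_eq_Ioc_add_one (by omega), sum_insert (by simp), ← ih]
    simp

lemma mul_sum_abs_le_sqrt_card_mul {ι : Type*} (s : Finset ι) {c : ℝ} (hc : 0 ≤ c) (v : ι → ℝ) :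
    c * ∑ i ∈ s, |v i| ≤ √(#s * c) * √(∑ i ∈ s, c * |v i| ^ 2) := by
  rw [← Real.sqrt_mul (by positivity), ← mul_sum]
  refine Real.le_sqrt_of_sq_le ?_
  calc (c * ∑ i ∈ s, |v i|) ^ 2 = c ^ 2 * (∑ i ∈ s, |v i|) ^ 2 := by ring
    _ ≤ c ^ 2 * (#s * ∑ i ∈ s, |v i| ^ 2) := by gcongr; exact sq_sum_le_card_mul_sum_sq
    _ = #s * c * (c * ∑ i ∈ s, |v i| ^ 2) := by ring

lemma exists_abs_le_abs_sub_of_sum_eq_zero {ι : Type*} {s : Finset ι} (hs : s.Nonempty)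
    {f : ι → ℝ} (hf : ∑ i ∈ s, f i = 0) (x : ℝ) : ∃ i ∈ s, |x| ≤ |x - f i| := by
  have hsign : ∃ i ∈ s, x * f i ≤ 0 := by
    rcases le_total 0 x with hx | hx
    · obtain ⟨i, hi, hfi⟩ :=
        exists_le_of_sum_le hs (f := f) (g := fun _ => 0) (by rw [hf, sum_const_zero])
      exact ⟨i, hi, mul_nonpos_of_nonneg_of_nonpos hx hfi⟩
    · obtain ⟨i, hi, hfi⟩ :=
        exists_le_of_sum_le hs (f := fun _ => 0) (g := f) (by rw [hf, sum_const_zero])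
      exact ⟨i, hi, mul_nonpos_of_nonpos_of_nonneg hx hfi⟩
  obtain ⟨i, hi, hxi⟩ := hsign
  exact ⟨i, hi, sq_le_sq.1 (by nlinarith [sq_nonneg (f i)])⟩

lemma abs_sub_le_eps_mul_sum_abs_D {N : ℕ} (u : ℤ → ℝ) {a b : ℤ} (ha : a ∈ cell N)
    (hb : b ∈ cell N) : |u b - u a| ≤ eps N * ∑ k ∈ cell N, |D N u k| := by
  wlog hab : a ≤ b generalizing a b
  · rw [abs_sub_comm]; exact this hb ha (by omega)
  have hN := one_le_of_mem_cell ha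
  have hsub : Ioc a b ⊆ cell N := by
    intro k hk
    simp only [cell, mem_Icc, mem_Ioc] at ha hb hk ⊢
    omega
  calc |u b - u a| = |∑ k ∈ Ioc a b, eps N * D N u k| := by
        simp only [eps_mul_D hN, sub_eq_sum_Ioc u hab]
    _ ≤ ∑ k ∈ Ioc a b, eps N * |D N u k| :=
        (abs_sum_le_sum_abs _ _).trans_eq (by simp only [abs_mul, abs_of_nonneg (eps_nonneg N)])
    _ ≤ ∑ k ∈ cell N, eps N * |D N u k| :=
        sum_le_sum_of_subset_of_nonneg hsub fun _ _ _ => mul_nonneg (eps_nonneg N) (abs_nonneg _)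
    _ = eps N * ∑ k ∈ cell N, |D N u k| := by rw [mul_sum]

lemma abs_le_sqrt_two_mul_sqrt_nsq_D {N : ℕ} {u : ℤ → ℝ} (hmean : MeanZero N u) {ℓ : ℤ}
    (hℓ : ℓ ∈ cell N) : |u ℓ| ≤ √2 * √(nsq N (D N u)) := by
  obtain ⟨m, hm, hum⟩ := exists_abs_le_abs_sub_of_sum_eq_zero ⟨ℓ, hℓ⟩ hmean (u ℓ)
  calc |u ℓ| ≤ |u ℓ - u m| := hum
    _ ≤ eps N * ∑ k ∈ cell N, |D N u k| := by
        rw [abs_sub_comm]; exact abs_sub_le_eps_mul_sum_abs_D u hℓ hm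
    _ ≤ √(#(cell N) * eps N) * √(nsq N (D N u)) :=
        mul_sum_abs_le_sqrt_card_mul _ (eps_nonneg N) _
    _ = √2 * √(nsq N (D N u)) := by rw [card_cell_mul_eps (one_le_of_mem_cell hℓ)]

lemma eps_mul_sum_abs_comp_add_one_le {N : ℕ} {v : ℤ → ℝ} (hv : Per N v) {s : Finset ℤ}
    (hs : s ⊆ cell N) : eps N * ∑ ℓ ∈ s, |v (ℓ + 1)| ≤ √(#s * eps N) * √(nsq N v) := by
  calc eps N * ∑ ℓ ∈ s, |v (ℓ + 1)|
      ≤ √(#s * eps N) * √(∑ ℓ ∈ s, eps N * |v (ℓ + 1)| ^ 2) :=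
        mul_sum_abs_le_sqrt_card_mul _ (eps_nonneg N) _
    _ ≤ √(#s * eps N) * √(nsq N fun ℓ => v (ℓ + 1)) := by
        gcongr
        exact sum_le_sum_of_subset_of_nonneg hs fun _ _ _ =>
          mul_nonneg (eps_nonneg N) (by positivity)
    _ = √(#s * eps N) * √(nsq N v) := by rw [nsq_comp_add_one hv]

lemma Tterm_eq_sum_interf {N : ℕ} {β : ℤ → ℝ}
    (hsupp : ∀ ℓ ∈ cell N, ℓ ∉ interf N β → D3 N β (ℓ + 1) = 0) (u : ℤ → ℝ) :
    Tterm N β u = ∑ ℓ ∈ interf N β, eps N ^ 3 * D3 N β (ℓ + 1) * u ℓ * D N u (ℓ + 1) :=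
  (sum_subset (filter_subset _ _) fun ℓ hℓ hℓI => by simp [hsupp ℓ hℓ hℓI]).symm

theorem stmt_6_general (N : ℕ) (β : ℤ → ℝ) (hβper : Per N β)
    (hsupp : ∀ ℓ ∈ cell N, ℓ ∉ interf N β → D3 N β (ℓ + 1) = 0)
    (u : ℤ → ℝ) (hper : Per N u) (hmean : MeanZero N u)
    (hne : (cell N).Nonempty) :
    |Tterm N β u|
      ≤ Real.sqrt 2 * eps N ^ 2 * Real.sqrt ((interf N β).card * eps N)
          * (cell N).sup' hne (fun ℓ => |D3 N β ℓ|) * nsq N (D N u) := by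
  set ε := eps N
  set M := (cell N).sup' hne (fun ℓ => |D3 N β ℓ|)
  set E := nsq N (D N u)
  have hε : 0 ≤ ε := eps_nonneg N
  have hM : ∀ ℓ, |D3 N β ℓ| ≤ M := abs_le_sup'_cell hβper.D3 hne
  have hM0 : 0 ≤ M := (abs_nonneg _).trans (hM 0)
  have hE : 0 ≤ E := sum_nonneg fun _ _ => by positivity
  have hI : interf N β ⊆ cell N := filter_subset _ _
  calc |Tterm N β u|
      ≤ ∑ ℓ ∈ interf N β, |ε ^ 3 * D3 N β (ℓ + 1) * u ℓ * D N u (ℓ + 1)| := by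
        rw [Tterm_eq_sum_interf hsupp]; exact abs_sum_le_sum_abs _ _
    _ ≤ ∑ ℓ ∈ interf N β, ε ^ 2 * M * (√2 * √E) * (ε * |D N u (ℓ + 1)|) := by
        refine sum_le_sum fun ℓ hℓ => ?_
        have hu := abs_le_sqrt_two_mul_sqrt_nsq_D hmean (hI hℓ)
        rw [abs_mul, abs_mul, abs_mul, abs_pow, abs_of_nonneg hε]
        calc ε ^ 3 * |D3 N β (ℓ + 1)| * |u ℓ| * |D N u (ℓ + 1)|
            ≤ ε ^ 3 * M * (√2 * √E) * |D N u (ℓ + 1)| := by gcongr; exact hM _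
          _ = _ := by ring
    _ = √2 * ε ^ 2 * M * √E * (ε * ∑ ℓ ∈ interf N β, |D N u (ℓ + 1)|) := by
        simp only [mul_sum]; exact sum_congr rfl fun _ _ => by ring
    _ ≤ √2 * ε ^ 2 * M * √E * (√((interf N β).card * ε) * √E) := by
        have := eps_mul_sum_abs_comp_add_one_le hper.D hI
        gcongr
    _ = √2 * ε ^ 2 * √((interf N β).card * ε) * M * E := by
        linear_combination (√2 * ε ^ 2 * √((interf N β).card * ε) * M) * Real.mul_self_sqrt hE

/-- estimate of the error term T:
`|T| ≤ √2 · ε² (Kε)^{1/2} ‖D³β‖_{ℓ∞} ‖Du‖²`, where `K = #I`. -/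
theorem stmt_6 (N : ℕ) (hN : 1 ≤ N) (β : ℤ → ℝ) (hβper : Per N β)
    (hsupp : ∀ ℓ ∈ cell N, ℓ ∉ interf N β → D3 N β (ℓ + 1) = 0)
    (u : ℤ → ℝ) (hper : Per N u) (hmean : MeanZero N u)
    (hne : (cell N).Nonempty) :
    |Tterm N β u|
      ≤ Real.sqrt 2 * eps N ^ 2 * Real.sqrt ((interf N β).card * eps N)
          * (cell N).sup' hne (fun ℓ => |D3 N β ℓ|) * nsq N (D N u) :=
  stmt_6_general N β hβper hsupp u hper hmean hne
end
end

section
/- Let N ≥ 1 be an integer, ε := 1/N, M a symmetric real 2×2 matrix, and β : 𝕃 → ℝ Ω-periodic. Define, for Ω-periodic v : 𝕃 → ℝ², the operators (L^a_{b₁} v)(x) := −M·D_{b₁}D_{b₁}v(x−b₁), (L^c_{b₁} v)(x) := −M·[D_{a₁}D_{a₁}v(x−a₁) + D_{a₂}D_{a₂}v(x−a₂) + D_{a₁}D_{a₂}v(x−a₁) + D_{a₁}D_{a₂}v(x−a₂)], and (L^{bqcf}_{b₁} v)(x) := β(x)(L^a_{b₁}v)(x) + (1−β(x))(L^c_{b₁}v)(x).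 Then for every u ∈ U: ⟨L^{bqcf}_{b₁} u, u⟩ = ⟨L^c_{b₁} u, u⟩ − ε⁴ Σ_{x∈𝓛} β(x−a₂) |D_{a₁}D_{a₂}u(x−a₁−a₂)|²_M + R_{b₁} + S_{b₁}, where R_{b₁} := −ε⁴ Σ_{x∈𝓛} { D_{a₁}β(x−2a₁) ⟨D_{a₁}u(x−2a₁), D_{a₂}D_{a₂}u(x−a₁−a₂)⟩_M + D_{a₂}β(x−a₂) ⟨D_{a₁}u(x−a₁), D_{a₁}D_{a₂}u(x−a₁−a₂)⟩_M } and S_{b₁} := −ε⁴ Σ_{x∈𝓛} D_{a₁}D_{a₁}β(x−2a₁) ⟨u(x−a₁), D_{a₂}D_{a₂}u(x−a₁−a₂)⟩_M. -/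
open Finset

noncomputable section

attribute [local instance] Classical.propDecidable

/-- lattice vectors (as elements of ℝ², realized as `Fin 2 → ℝ`):
`a₁ = ε(1,0)`, `a₂ = ε(1/2,√3/2)`, `a₃ = ε(−1/2,√3/2)`, `a₄ = −a₁`, `a₅ = −a₂`, `a₆ = −a₃`. -/
def avec (N : ℕ) : Fin 6 → (Fin 2 → ℝ) :=
  ![![eps N, 0],
    ![eps N / 2, eps N * Real.sqrt 3 / 2],
    ![-(eps N) / 2, eps N * Real.sqrt 3 / 2],
    ![-(eps N), 0],
    ![-(eps N) / 2, -(eps N * Real.sqrt 3) / 2],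
    ![eps N / 2, -(eps N * Real.sqrt 3) / 2]]

/-- lattice coordinates: a point `p = (i,j) ∈ ℤ²` represents `i a₁ + j a₂ ∈ 𝕃`. -/
def pt (N : ℕ) (p : ℤ × ℤ) : Fin 2 → ℝ :=
  (p.1 : ℝ) • avec N 0 + (p.2 : ℝ) • avec N 1

/-- index offsets corresponding to the directions `a₁,…,a₆`. -/
def oa : Fin 6 → ℤ × ℤ := ![(1, 0), (0, 1), (-1, 1), (-1, 0), (0, -1), (1, -1)]

/-- index offsets corresponding to the second-neighbour directions
`b₁ = a₁+a₂`, `b₂ = a₂+a₃`, `b₃ = a₃+a₄ = a₃−a₁`. -/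
def ob : Fin 3 → ℤ × ℤ := ![(1, 1), (-1, 2), (-2, 1)]

/-- the periodic index cell: both lattice coordinates in `{−N+1,…,N}`. -/
def cell2 (N : ℕ) : Finset (ℤ × ℤ) :=
  Finset.Icc (-(N : ℤ) + 1) N ×ˢ Finset.Icc (-(N : ℤ) + 1) N

/-- Ω-periodicity of a lattice function (in lattice coordinates). -/
def Per2 {α : Type*} (N : ℕ) (v : ℤ × ℤ → α) : Prop :=
  ∀ p : ℤ × ℤ, v (p.1 + 2 * N, p.2) = v p ∧ v (p.1, p.2 + 2 * N) = v p

/-- zero mean over the periodic cell. -/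
def MeanZero2 (N : ℕ) (u : ℤ × ℤ → Fin 2 → ℝ) : Prop :=
  ∑ p ∈ cell2 N, u p = 0

/-- finite-difference operator `D_r v(x) := (v(x+r) − v(x))/ε` in lattice coordinates;
`D_r D_s v = Dd r (Dd s v)`. -/
def Dd {α : Type*} [AddCommGroup α] [Module ℝ α] (N : ℕ) (d : ℤ × ℤ)
    (v : ℤ × ℤ → α) (p : ℤ × ℤ) : α :=
  (eps N)⁻¹ • (v (p + d) - v p)

/-- Euclidean inner product on ℝ². -/
def vdot (r s : Fin 2 → ℝ) : ℝ := r 0 * s 0 + r 1 * s 1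

/-- squared Euclidean norm on ℝ². -/
def vnormsq (r : Fin 2 → ℝ) : ℝ := vdot r r

/-- the matrix inner product `⟨r,s⟩_M := rᵀ M s`. -/
def mdot (M : Matrix (Fin 2) (Fin 2) ℝ) (r s : Fin 2 → ℝ) : ℝ := vdot r (M.mulVec s)

/-- the ℓ²_ε inner product `⟨u,w⟩ := ε² Σ_{x∈𝓛} u(x)·w(x)`. -/
def ip2 (N : ℕ) (u w : ℤ × ℤ → Fin 2 → ℝ) : ℝ :=
  eps N ^ 2 * ∑ p ∈ cell2 N, vdot (u p) (w p)

/-- `‖Du‖²_{ℓ²_ε} := ε² Σ_{x∈𝓛} Σ_{i=1}^{3} |D_{a_i}u(x)|²`. -/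
def gradnsq (N : ℕ) (u : ℤ × ℤ → Fin 2 → ℝ) : ℝ :=
  eps N ^ 2 * ∑ p ∈ cell2 N,
    (vnormsq (Dd N (oa 0) u p) + vnormsq (Dd N (oa 1) u p) + vnormsq (Dd N (oa 2) u p))

/-- the closed regular hexagon of "radius" r centered at the origin with sides
parallel to the lattice directions: convex hull of the six vertices
`r(cos(π/6 + kπ/3), sin(π/6 + kπ/3))`. -/
def Hex (r : ℝ) : Set (Fin 2 → ℝ) :=
  convexHull ℝ
    {v | ∃ k : Fin 6, v = r • ![Real.cos (Real.pi / 6 + (k : ℕ) * Real.pi / 3),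
                                Real.sin (Real.pi / 6 + (k : ℕ) * Real.pi / 3)]}

/-- the blending annulus `Ω_b := Hex(εR_b) \ Hex(εR_a)`. -/
def OmegaB (N : ℕ) (Ra Rb : ℕ) : Set (Fin 2 → ℝ) :=
  Hex (eps N * Rb) \ Hex (eps N * Ra)

/-- operator norm of a 2×2 matrix (as map on Euclidean ℝ²). -/
def opNorm (M : Matrix (Fin 2) (Fin 2) ℝ) : ℝ :=
  ‖Matrix.toEuclideanCLM (𝕜 := ℝ) M‖

/-- atomistic b₁-operator `(L^a_{b₁}v)(x) := −M·D_{b₁}D_{b₁}v(x−b₁)`. -/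
def Lab1 (N : ℕ) (M : Matrix (Fin 2) (Fin 2) ℝ) (v : ℤ × ℤ → Fin 2 → ℝ)
    (p : ℤ × ℤ) : Fin 2 → ℝ :=
  -M.mulVec (Dd N (ob 0) (Dd N (ob 0) v) (p - ob 0))

/-- continuum b₁-operator
`(L^c_{b₁}v)(x) := −M·[D_{a₁}D_{a₁}v(x−a₁) + D_{a₂}D_{a₂}v(x−a₂)
 + D_{a₁}D_{a₂}v(x−a₁) + D_{a₁}D_{a₂}v(x−a₂)]`. -/
def Lcb1 (N : ℕ) (M : Matrix (Fin 2) (Fin 2) ℝ) (v : ℤ × ℤ → Fin 2 → ℝ)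
    (p : ℤ × ℤ) : Fin 2 → ℝ :=
  -M.mulVec (Dd N (oa 0) (Dd N (oa 0) v) (p - oa 0)
      + Dd N (oa 1) (Dd N (oa 1) v) (p - oa 1)
      + Dd N (oa 0) (Dd N (oa 1) v) (p - oa 0)
      + Dd N (oa 0) (Dd N (oa 1) v) (p - oa 1))

/-- blended b₁-operator. -/
def Lbqcfb1 (N : ℕ) (M : Matrix (Fin 2) (Fin 2) ℝ) (β : ℤ × ℤ → ℝ)
    (v : ℤ × ℤ → Fin 2 → ℝ) (p : ℤ × ℤ) : Fin 2 → ℝ :=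
  β p • Lab1 N M v p + (1 - β p) • Lcb1 N M v p

/-- the error term `R_{b₁}`. -/
def Rb1 (N : ℕ) (M : Matrix (Fin 2) (Fin 2) ℝ) (β : ℤ × ℤ → ℝ)
    (u : ℤ × ℤ → Fin 2 → ℝ) : ℝ :=
  -(eps N ^ 4) * ∑ p ∈ cell2 N,
    (Dd N (oa 0) β (p - oa 0 - oa 0)
        * mdot M (Dd N (oa 0) u (p - oa 0 - oa 0))
            (Dd N (oa 1) (Dd N (oa 1) u) (p - oa 0 - oa 1))
      + Dd N (oa 1) β (p - oa 1)
          * mdot M (Dd N (oa 0) u (p - oa 0))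
              (Dd N (oa 0) (Dd N (oa 1) u) (p - oa 0 - oa 1)))

/-- the error term `S_{b₁}`. -/
def Sb1 (N : ℕ) (M : Matrix (Fin 2) (Fin 2) ℝ) (β : ℤ × ℤ → ℝ)
    (u : ℤ × ℤ → Fin 2 → ℝ) : ℝ :=
  -(eps N ^ 4) * ∑ p ∈ cell2 N,
    Dd N (oa 0) (Dd N (oa 0) β) (p - oa 0 - oa 0)
      * mdot M (u (p - oa 0)) (Dd N (oa 1) (Dd N (oa 1) u) (p - oa 0 - oa 1))

/-!
Along `b₁ = a₁ + a₂` the atomistic second difference exceeds the continuum stencil by exactly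
`ε² D_{a₁}D_{a₁}D_{a₂}D_{a₂}`, so
`⟨L^{bqcf}u, u⟩ - ⟨L^c u, u⟩ = -ε⁴ Σ_x β(x) ⟨u(x), D_{a₁}D_{a₁}D_{a₂}D_{a₂}u(x - a₁ - a₂)⟩_M`.
Three summations by parts over the periodic cell (twice along `a₁`, once along `a₂`) move two
of the four differences onto `βu`; the discrete product rule sends the differences that fall on
`β` into `R_{b₁}` and `S_{b₁}`, and what is left is the `|D_{a₁}D_{a₂}u|²_M` term.
-/

open Function

theorem Function.Periodic.sum_Ioc_comp_add {α : Type*} [AddCommMonoid α] {g : ℤ → α} {T : ℤ}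
    (hg : Periodic g T) (hT : 0 < T) (a k : ℤ) :
    ∑ i ∈ Ioc a (a + T), g (i + k) = ∑ i ∈ Ioc a (a + T), g i := by
  have hmem (x : ℤ) : toIocMod hT a x ∈ Ioc a (a + T) := by
    simpa only [mem_Ioc, Set.mem_Ioc] using toIocMod_mem_Ioc hT a x
  have hinv : ∀ i ∈ Ioc a (a + T), ∀ k, toIocMod hT a (toIocMod hT a (i + k) - k) = i := by
    intro i hi k
    rw [← self_sub_toIocDiv_zsmul hT a (i + k), sub_right_comm, add_sub_cancel_right,
      toIocMod_sub_zsmul, toIocMod_eq_self]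
    simpa only [mem_Ioc, Set.mem_Ioc] using hi
  refine sum_nbij' (fun i => toIocMod hT a (i + k)) (fun j => toIocMod hT a (j - k))
    (fun _ _ => hmem _) (fun _ _ => hmem _) (fun i hi => hinv i hi k) (fun j hj => ?_)
    (fun i _ => ?_)
  · simpa only [sub_eq_add_neg, neg_neg] using hinv j hj (-k)
  · rw [← self_sub_toIocDiv_zsmul, hg.sub_zsmul_eq]

theorem sum_cell2_comp_add {α : Type*} [AddCommMonoid α] {N : ℕ} (hN : 0 < N)
    {f : ℤ × ℤ → α} (hf : Per2 N f) (d : ℤ × ℤ) :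
    ∑ p ∈ cell2 N, f (p + d) = ∑ p ∈ cell2 N, f p := by
  have hT : (0 : ℤ) < 2 * N := by positivity
  set I := Ioc (-(N : ℤ)) (-N + 2 * N)
  have hcell : cell2 N = I ×ˢ I := by
    ext; simp only [I, cell2, mem_product, mem_Icc, mem_Ioc]; omega
  rw [hcell, sum_product, sum_product]
  calc ∑ x ∈ I, ∑ y ∈ I, f ((x, y) + d)
      = ∑ x ∈ I, ∑ y ∈ I, f (x + d.1, y) :=
        sum_congr rfl fun x _ => Periodic.sum_Ioc_comp_add (g := fun y => f (x + d.1, y))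
          (fun y => (hf (x + d.1, y)).2) hT _ d.2
    _ = ∑ x ∈ I, ∑ y ∈ I, f (x, y) :=
        Periodic.sum_Ioc_comp_add (g := fun x => ∑ y ∈ I, f (x, y))
          (fun x => sum_congr rfl fun y _ => (hf (x, y)).1) hT _ d.1

namespace Per2

variable {α β γ : Type*} {N : ℕ} {f : ℤ × ℤ → α} {g : ℤ × ℤ → β}

theorem comp_add (hf : Per2 N f) (c : ℤ × ℤ) : Per2 N (fun p => f (p + c)) := fun p => by
  constructor
  · convert (hf (p + c)).1 using 2
    ext <;> simp only [Prod.fst_add, Prod.snd_add, add_right_comm]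
  · convert (hf (p + c)).2 using 2
    ext <;> simp only [Prod.fst_add, Prod.snd_add, add_right_comm]

theorem comp_sub (hf : Per2 N f) (c : ℤ × ℤ) : Per2 N (fun p => f (p - c)) := by
  simpa only [sub_eq_add_neg] using hf.comp_add (-c)

theorem map₂ (hf : Per2 N f) (hg : Per2 N g) (F : α → β → γ) :
    Per2 N (fun p => F (f p) (g p)) := fun p => by
  simp only [(hf p).1, (hg p).1, (hf p).2, (hg p).2, and_self]

theorem dd [AddCommGroup α] [Module ℝ α] (hf : Per2 N f) (d : ℤ × ℤ) : Per2 N (Dd N d f) :=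
  (hf.comp_add d).map₂ hf fun x y => (eps N)⁻¹ • (x - y)

end Per2

section Difference

variable {E F G : Type*} [AddCommGroup E] [Module ℝ E] [AddCommGroup F] [Module ℝ F]
  [AddCommGroup G] [Module ℝ G] {N : ℕ}

theorem Dd_comp_sub (d c : ℤ × ℤ) (f : ℤ × ℤ → E) (p : ℤ × ℤ) :
    Dd N d (fun q => f (q - c)) p = Dd N d f (p - c) := by
  simp only [Dd, sub_add_eq_add_sub]

theorem Dd_comm (d d' : ℤ × ℤ) (f : ℤ × ℤ → E) : Dd N d (Dd N d' f) = Dd N d' (Dd N d f) := by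
  funext p
  simp only [Dd, add_right_comm p d d']
  module

theorem Dd_smul (d : ℤ × ℤ) (b : ℤ × ℤ → ℝ) (w : ℤ × ℤ → E) (p : ℤ × ℤ) :
    Dd N d (fun q => b q • w q) p = Dd N d b p • w (p + d) + b p • Dd N d w p := by
  simp only [Dd, smul_eq_mul]
  module

theorem Dd_smul' (d : ℤ × ℤ) (b : ℤ × ℤ → ℝ) (w : ℤ × ℤ → E) (p : ℤ × ℤ) :
    Dd N d (fun q => b q • w q) p = Dd N d b p • w p + b (p + d) • Dd N d w p := by
  simp only [Dd, smul_eq_mul]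
  module

theorem sum_bilin_Dd (B : E →ₗ[ℝ] F →ₗ[ℝ] G) (hN : 0 < N) {f : ℤ × ℤ → E} {g : ℤ × ℤ → F}
    (hf : Per2 N f) (hg : Per2 N g) (a c d : ℤ × ℤ) :
    ∑ p ∈ cell2 N, B (f (p - a)) (Dd N d g (p - c))
      = -∑ p ∈ cell2 N, B (Dd N d f (p - a - d)) (g (p - c)) := by
  have hshift := sum_cell2_comp_add hN
    (((hf.comp_sub d).comp_sub a).map₂ (hg.comp_sub c) fun x y => B x y) d
  have hpt (p : ℤ × ℤ) : p + d - a - d = p - a ∧ p + d - c = p - c + d := by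
    constructor <;> abel
  simp only [hpt] at hshift
  simp only [Dd, map_smul, map_sub, LinearMap.smul_apply, LinearMap.sub_apply, sub_add_cancel,
    ← smul_sum, sum_sub_distrib, hshift]
  module

theorem Dd_add_Dd_add_eq (he : eps N ≠ 0) (d₁ d₂ : ℤ × ℤ) (v : ℤ × ℤ → E) (p : ℤ × ℤ) :
    Dd N (d₁ + d₂) (Dd N (d₁ + d₂) v) (p - (d₁ + d₂))
      = Dd N d₁ (Dd N d₁ v) (p - d₁) + Dd N d₂ (Dd N d₂ v) (p - d₂)
        + Dd N d₁ (Dd N d₂ v) (p - d₁) + Dd N d₁ (Dd N d₂ v) (p - d₂)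
        + eps N ^ 2 • Dd N d₁ (Dd N d₁ (Dd N d₂ (Dd N d₂ v))) (p - d₁ - d₂) := by
  obtain ⟨q, rfl⟩ : ∃ q, p = q + d₁ + d₂ := ⟨p - d₁ - d₂, by abel⟩
  simp only [Dd]
  abel_nf
  match_scalars <;> field_simp <;> ring

end Difference

section SummationByParts

variable {E : Type*} [AddCommGroup E] [Module ℝ E] (B : LinearMap.BilinForm ℝ E) {N : ℕ}
  (hN : 0 < N) {β : ℤ × ℤ → ℝ} {u : ℤ × ℤ → E} (hβ : Per2 N β) (hu : Per2 N u)
include hN hβ hu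

theorem sum_mul_bilin_Dd (d : ℤ × ℤ) {g : ℤ × ℤ → E} (hg : Per2 N g) (c : ℤ × ℤ) :
    ∑ p ∈ cell2 N, β p * B (u p) (Dd N d g (p - c))
      = -∑ p ∈ cell2 N, Dd N d β (p - d) * B (u p) (g (p - c))
        - ∑ p ∈ cell2 N, β (p - d) * B (Dd N d u (p - d)) (g (p - c)) := by
  have h := sum_bilin_Dd B hN (hβ.map₂ hu fun b x => b • x) hg 0 c d
  simp only [sub_zero, Dd_smul, sub_add_cancel, map_add, map_smul, LinearMap.add_apply,
    LinearMap.smul_apply, smul_eq_mul, sum_add_distrib] at h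
  rw [h]
  ring

theorem sum_mul_bilin_Dd' (d : ℤ × ℤ) {g : ℤ × ℤ → E} (hg : Per2 N g) (c : ℤ × ℤ) :
    ∑ p ∈ cell2 N, β p * B (u p) (Dd N d g (p - c))
      = -∑ p ∈ cell2 N, Dd N d β (p - d) * B (u (p - d)) (g (p - c))
        - ∑ p ∈ cell2 N, β p * B (Dd N d u (p - d)) (g (p - c)) := by
  have h := sum_bilin_Dd B hN (hβ.map₂ hu fun b x => b • x) hg 0 c d
  simp only [sub_zero, Dd_smul', sub_add_cancel, map_add, map_smul, LinearMap.add_apply,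
    LinearMap.smul_apply, smul_eq_mul, sum_add_distrib] at h
  rw [h]
  ring

theorem sum_mul_bilin_Dd4 (d₁ d₂ : ℤ × ℤ) :
    ∑ p ∈ cell2 N, β p * B (u p) (Dd N d₁ (Dd N d₁ (Dd N d₂ (Dd N d₂ u))) (p - d₁ - d₂))
      = ∑ p ∈ cell2 N, Dd N d₁ (Dd N d₁ β) (p - d₁ - d₁)
          * B (u (p - d₁)) (Dd N d₂ (Dd N d₂ u) (p - d₁ - d₂))
        + ∑ p ∈ cell2 N, (Dd N d₁ β (p - d₁ - d₁)
            * B (Dd N d₁ u (p - d₁ - d₁)) (Dd N d₂ (Dd N d₂ u) (p - d₁ - d₂))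
          + Dd N d₂ β (p - d₂) * B (Dd N d₁ u (p - d₁)) (Dd N d₁ (Dd N d₂ u) (p - d₁ - d₂)))
        + ∑ p ∈ cell2 N, β (p - d₂)
          * B (Dd N d₁ (Dd N d₂ u) (p - d₁ - d₂)) (Dd N d₁ (Dd N d₂ u) (p - d₁ - d₂)) := by
  have hV : Per2 N (Dd N d₂ (Dd N d₂ u)) := (hu.dd d₂).dd d₂
  have h₁ := sum_mul_bilin_Dd' B hN hβ hu d₁ (hV.dd d₁) (d₁ + d₂)
  have h₂ := sum_mul_bilin_Dd B hN ((hβ.dd d₁).comp_sub d₁) (hu.comp_sub d₁) d₁ hV (d₁ + d₂)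
  have h₃ := sum_mul_bilin_Dd B hN hβ ((hu.dd d₁).comp_sub d₁) d₂ ((hu.dd d₂).dd d₁) (d₁ + d₂)
  simp only [Dd_comp_sub, Dd_comm d₂ d₁ u, sub_sub, add_comm d₂ d₁] at h₁ h₂ h₃ ⊢
  rw [← Dd_comm d₁ d₂ (Dd N d₂ u)] at h₃
  rw [sum_add_distrib, h₁, h₂, h₃]
  ring

end SummationByParts

theorem mdot_eq_toBilin' (M : Matrix (Fin 2) (Fin 2) ℝ) (r s : Fin 2 → ℝ) :
    mdot M r s = Matrix.toBilin' M r s := by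
  simp [mdot, vdot, Matrix.toBilin'_apply', dotProduct, Fin.sum_univ_two]

theorem Lab1_eq_Lcb1_sub {N : ℕ} (he : eps N ≠ 0) (M : Matrix (Fin 2) (Fin 2) ℝ)
    (v : ℤ × ℤ → Fin 2 → ℝ) (p : ℤ × ℤ) :
    Lab1 N M v p = Lcb1 N M v p - eps N ^ 2
      • M.mulVec (Dd N (oa 0) (Dd N (oa 0) (Dd N (oa 1) (Dd N (oa 1) v))) (p - oa 0 - oa 1)) := by
  rw [Lab1, Lcb1, show ob 0 = oa 0 + oa 1 from rfl, Dd_add_Dd_add_eq he, Matrix.mulVec_add,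
    Matrix.mulVec_smul]
  abel

theorem ip2_Lbqcfb1_sub_ip2_Lcb1 {N : ℕ} (he : eps N ≠ 0) (M : Matrix (Fin 2) (Fin 2) ℝ)
    (β : ℤ × ℤ → ℝ) (u : ℤ × ℤ → Fin 2 → ℝ) :
    ip2 N (Lbqcfb1 N M β u) u - ip2 N (Lcb1 N M u) u
      = -eps N ^ 4 * ∑ p ∈ cell2 N, β p * mdot M (u p)
          (Dd N (oa 0) (Dd N (oa 0) (Dd N (oa 1) (Dd N (oa 1) u))) (p - oa 0 - oa 1)) := by
  rw [ip2, ip2, ← mul_sub, ← sum_sub_distrib, mul_sum, mul_sum]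
  refine sum_congr rfl fun p _ => ?_
  simp only [Lbqcfb1, Lab1_eq_Lcb1_sub he, mdot, vdot, Pi.add_apply, Pi.sub_apply,
    Pi.smul_apply, smul_eq_mul]
  ring

theorem stmt_14_general (N : ℕ) (hN : 1 ≤ N) (M : Matrix (Fin 2) (Fin 2) ℝ)
    (β : ℤ × ℤ → ℝ) (hβper : Per2 N β)
    (u : ℤ × ℤ → Fin 2 → ℝ) (huper : Per2 N u) :
    ip2 N (Lbqcfb1 N M β u) u
      = ip2 N (Lcb1 N M u) u
          - eps N ^ 4 * ∑ p ∈ cell2 N,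
              β (p - oa 1)
                * mdot M (Dd N (oa 0) (Dd N (oa 1) u) (p - oa 0 - oa 1))
                    (Dd N (oa 0) (Dd N (oa 1) u) (p - oa 0 - oa 1))
          + Rb1 N M β u + Sb1 N M β u := by
  have he : eps N ≠ 0 := by simp only [eps]; positivity
  have hsum := sum_mul_bilin_Dd4 (Matrix.toBilin' M) hN hβper huper (oa 0) (oa 1)
  simp only [← mdot_eq_toBilin'] at hsum
  rw [Rb1, Sb1]
  linear_combination ip2_Lbqcfb1_sub_ip2_Lcb1 he M β u - eps N ^ 4 * hsum

/-- divergence form of the quadratic form of `L^{bqcf}_{b₁}`. -/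
theorem stmt_14 (N : ℕ) (hN : 1 ≤ N) (M : Matrix (Fin 2) (Fin 2) ℝ)
    (hM : M.IsSymm) (β : ℤ × ℤ → ℝ) (hβper : Per2 N β)
    (u : ℤ × ℤ → Fin 2 → ℝ) (huper : Per2 N u) (humean : MeanZero2 N u) :
    ip2 N (Lbqcfb1 N M β u) u
      = ip2 N (Lcb1 N M u) u
          - eps N ^ 4 * ∑ p ∈ cell2 N,
              β (p - oa 1)
                * mdot M (Dd N (oa 0) (Dd N (oa 1) u) (p - oa 0 - oa 1))
                    (Dd N (oa 0) (Dd N (oa 1) u) (p - oa 0 - oa 1))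
          + Rb1 N M β u + Sb1 N M β u :=
  stmt_14_general N hN M β hβper u huper
end
end
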